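/- (Switching principle II, second identity.) Let G = (V,E) be a finite simple graph with edge weights K : E → ℂ, let x_1, …, x_{2n} ∈ V be distinct vertices and ℓ_1*, …, ℓ_{2n}* ⊆ E be disorder edge sets satisfying the intersection-parity hypothesis. Then for all pairwise distinct k, l, m ∈ {2, …, 2n}: W^{(2)}_{G,K}( ({x_1, x_k}, {ℓ_1*, ℓ_k*}), ({x_2, …, x_{2n}} ∖ {x_k}, {ℓ_2*, …, ℓ_{2n}*} ∖ {ℓ_k*}); x_1 ↔ x_m and x_k ↔ x_l ) = (−1)^{k−l−1} · W^{(2)}_{G,K}( ({x_1, x_l}, {ℓ_1*, ℓ_l*}), ({x_2, …, x_{2n}} ∖ {x_l}, {ℓ_2*, …, ℓ_{2n}*} ∖ {ℓ_l*}); x_1 ↔ x_m and x_k ↔ x_l ). -/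

import Mathlib

open scoped Classical symmDiff
open Finset

/-- `ω` is a dimer cover (perfect matching) of the graph `G` depleted by the
monomer set `M`. -/
def IsDimerCover {V : Type*} (G : SimpleGraph V) (M : Finset V)
    (ω : Finset (Sym2 V)) : Prop :=
  (∀ e ∈ ω, e ∈ G.edgeSet) ∧
  (∀ v ∈ M, ∀ e ∈ ω, v ∉ e) ∧
  (∀ v : V, v ∉ M → ∃! e, e ∈ ω ∧ v ∈ e)

/-- The spanning subgraph of the overlay `ω₁ Δ ω₂`. -/
def symmGraph {V : Type*} [DecidableEq V] (ω₁ ω₂ : Finset (Sym2 V)) : SimpleGraph V :=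
  SimpleGraph.fromEdgeSet (↑(ω₁ ∆ ω₂) : Set (Sym2 V))

/-- The order–disorder double dimer amplitude `W²_{G,K}((M₁,𝓛₁),(M₂,𝓛₂); C)`:
`M₁, M₂` are monomer sets, `L₁, L₂ ⊆ ℕ` are the labels of the disorder edge sets
(`j ↦ ℓ j`) attached to the two replicas, and `C` is a list of pairs of vertices,
each required to lie in a common connected component of the overlay `ω₁ Δ ω₂`. -/
noncomputable def Wdouble {V : Type*} [Fintype V] [DecidableEq V]
    (G : SimpleGraph V) (K : Sym2 V → ℂ) (ℓ : ℕ → Finset (Sym2 V))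
    (M₁ : Finset V) (L₁ : Finset ℕ) (M₂ : Finset V) (L₂ : Finset ℕ)
    (C : List (V × V)) : ℂ :=
  ∑ p ∈ Finset.univ.filter (fun p : Finset (Sym2 V) × Finset (Sym2 V) =>
      IsDimerCover G M₁ p.1 ∧ IsDimerCover G M₂ p.2 ∧
      ∀ c ∈ C, (symmGraph p.1 p.2).Reachable c.1 c.2),
    ((∏ b ∈ p.1, K b) * (-1 : ℂ) ^ (∑ j ∈ L₁, (p.1 ∩ ℓ j).card)) *
      ((∏ b ∈ p.2, K b) * (-1 : ℂ) ^ (∑ j ∈ L₂, (p.2 ∩ ℓ j).card))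

/-!
Since `x k` and `x l` are joined in the overlay `ω₁ ∆ ω₂`, their component is a path: the overlay
has maximal degree two and every monomer is a vertex of degree at most one, so this component
contains no third monomer. Exchanging the two dimer covers along that path turns an admissible
pair with monomers `{x 1, x k}` into one with monomers `{x 1, x l}` and back. It leaves the overlay,
hence every connection condition, and the product of the weights unchanged, and it changes the
disorder sign exactly by the factor that the intersection-parity hypothesis evaluates to
`(-1)^(k-l-1)`.
-/

namespace SimpleGraph

variable {V : Type*} {H : SimpleGraph V}

lemma Walk.IsPath.adj_mem_support
    (hdeg : ∀ v u₁ u₂ u₃, H.Adj v u₁ → H.Adj v u₂ → H.Adj v u₃ → u₁ = u₂ ∨ u₁ = u₃ ∨ u₂ = u₃)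
    {u v b : V} {p : H.Walk u v} (hp : p.IsPath) (hv : (H.neighborSet v).Subsingleton)
    (hbu : H.Adj b u) (hb : b ∉ p.support) :
    ∀ w ∈ p.support, ∀ y, H.Adj w y → y = b ∨ y ∈ p.support := by
  induction p generalizing b with
  | nil =>
    intro w hw y hy
    rw [Walk.support_nil, List.mem_singleton] at hw
    subst hw
    exact .inl (hv hy hbu.symm)
  | @cons u u' v h q ih =>
    rw [Walk.cons_isPath_iff] at hp
    rw [Walk.support_cons, List.mem_cons, not_or] at hb
    intro w hw y hy
    rw [Walk.support_cons, List.mem_cons] at hw ⊢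
    rcases hw with rfl | hw
    · rcases hdeg w y b u' hy hbu.symm h with rfl | rfl | rfl
      · exact .inl rfl
      · exact .inr (.inr q.start_mem_support)
      · exact absurd q.start_mem_support hb.2
    · exact .inr (ih hp.1 hv h hp.2 w hw y hy)

lemma Walk.IsPath.not_subsingleton_neighborSet {u v b : V} {p : H.Walk u v} (hp : p.IsPath)
    (hbu : H.Adj b u) (hb : b ∉ p.support) :
    ∀ w ∈ p.support, w ≠ v → ¬ (H.neighborSet w).Subsingleton := by
  induction p generalizing b with
  | nil =>
    intro w hw hwv
    exact absurd (List.mem_singleton.1 hw) hwv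
  | @cons u u' v h q ih =>
    rw [Walk.cons_isPath_iff] at hp
    rw [Walk.support_cons, List.mem_cons, not_or] at hb
    intro w hw hwv hsub
    rcases List.mem_cons.1 hw with rfl | hw
    · exact hb.2 (hsub hbu.symm h ▸ q.start_mem_support)
    · exact ih hp.1 h hp.2 w hw hwv hsub

lemma Reachable.of_forall_adj {P : V → Prop} (hP : ∀ w y, H.Adj w y → P w → P y) {u v : V}
    (h : H.Reachable u v) (hu : P u) : P v := by
  obtain ⟨p⟩ := h
  induction p with
  | nil => exact hu
  | cons h _ ih => exact ih (hP _ _ h hu)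

lemma eq_or_eq_of_reachable_of_subsingleton_neighborSet
    (hdeg : ∀ v u₁ u₂ u₃, H.Adj v u₁ → H.Adj v u₂ → H.Adj v u₃ → u₁ = u₂ ∨ u₁ = u₃ ∨ u₂ = u₃)
    {a b c : V} (ha : (H.neighborSet a).Subsingleton) (hb : (H.neighborSet b).Subsingleton)
    (hc : (H.neighborSet c).Subsingleton) (hbc : b ≠ c) (hreach : H.Reachable b c)
    (hba : H.Reachable b a) : a = b ∨ a = c := by
  obtain ⟨p, hp⟩ := hreach.some.toPath
  cases p with
  | nil => exact absurd rfl hbc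
  | @cons _ b' _ h q =>
    rw [Walk.cons_isPath_iff] at hp
    have hclosed : ∀ w y, H.Adj w y → w ∈ (Walk.cons h q).support →
        y ∈ (Walk.cons h q).support := by
      intro w y hy hw
      rw [Walk.support_cons, List.mem_cons] at hw ⊢
      rcases hw with rfl | hw
      · exact .inr (hb hy h ▸ q.start_mem_support)
      · exact hp.1.adj_mem_support hdeg hc h hp.2 w hw y hy
    have ha_mem := hba.of_forall_adj hclosed (Walk.start_mem_support _)
    rw [Walk.support_cons, List.mem_cons] at ha_mem
    rcases ha_mem with rfl | ha_mem
    · exact .inl rfl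
    · by_contra hne
      exact hp.1.not_subsingleton_neighborSet h hp.2 a ha_mem (fun hac => hne (.inr hac)) ha

end SimpleGraph

section Overlay

variable {V : Type*} {G : SimpleGraph V} {M M₁ M₂ : Finset V}
  {ω ω₁ ω₂ : Finset (Sym2 V)}

lemma IsDimerCover.eq_of_mem (h : IsDimerCover G M ω) {e₁ e₂ : Sym2 V} {v : V}
    (he₁ : e₁ ∈ ω) (he₂ : e₂ ∈ ω) (hv₁ : v ∈ e₁) (hv₂ : v ∈ e₂) : e₁ = e₂ := by
  by_cases hv : v ∈ M
  · exact absurd hv₁ (h.2.1 v hv e₁ he₁)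
  · exact (h.2.2 v hv).unique ⟨he₁, hv₁⟩ ⟨he₂, hv₂⟩

lemma IsDimerCover.of_local
    (h : ∀ v, ∃ M' ω', IsDimerCover G M' ω' ∧ (v ∈ M ↔ v ∈ M') ∧ ∀ e, v ∈ e → (e ∈ ω ↔ e ∈ ω')) :
    IsDimerCover G M ω := by
  refine ⟨fun e he => ?_, fun v hv e he hve => ?_, fun v hv => ?_⟩
  · obtain ⟨M', ω', h', -, hω⟩ := h e.out.1
    exact h'.1 e ((hω e e.out_fst_mem).1 he)
  · obtain ⟨M', ω', h', hM, hω⟩ := h v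
    exact h'.2.1 v (hM.1 hv) e ((hω e hve).1 he) hve
  · obtain ⟨M', ω', h', hM, hω⟩ := h v
    obtain ⟨e, he, huniq⟩ := h'.2.2 v (hM.not.1 hv)
    exact ⟨e, ⟨(hω e he.2).2 he.1, he.2⟩,
      fun e' he' => huniq e' ⟨(hω e' he'.2).1 he'.1, he'.2⟩⟩

variable [DecidableEq V]

lemma symmGraph_adj {u v : V} :
    (symmGraph ω₁ ω₂).Adj u v ↔ s(u, v) ∈ ω₁ ∆ ω₂ ∧ u ≠ v := by
  rw [symmGraph, SimpleGraph.fromEdgeSet_adj, Finset.mem_coe]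

lemma symmGraph_comm (ω₁ ω₂ : Finset (Sym2 V)) : symmGraph ω₁ ω₂ = symmGraph ω₂ ω₁ := by
  rw [symmGraph, symmGraph, symmDiff_comm]

lemma symmGraph_symmDiff_symmDiff (ω₁ ω₂ γ : Finset (Sym2 V)) :
    symmGraph (ω₁ ∆ γ) (ω₂ ∆ γ) = symmGraph ω₁ ω₂ := by
  rw [symmGraph, symmGraph, symmDiff_symmDiff_symmDiff_comm, symmDiff_self, symmDiff_bot]

lemma reachable_of_mem_symmDiff {e : Sym2 V} {u v : V} (he : e ∈ ω₁ ∆ ω₂) (hu : u ∈ e)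
    (hv : v ∈ e) : (symmGraph ω₁ ω₂).Reachable u v := by
  by_cases huv : u = v
  · exact huv ▸ SimpleGraph.Reachable.refl u
  · rw [(Sym2.mem_and_mem_iff huv).1 ⟨hu, hv⟩] at he
    exact (symmGraph_adj.2 ⟨he, huv⟩).reachable

lemma IsDimerCover.eq_or_eq_or_eq_of_symmGraph_adj (h₁ : IsDimerCover G M₁ ω₁)
    (h₂ : IsDimerCover G M₂ ω₂) {v u₁ u₂ u₃ : V} (ha₁ : (symmGraph ω₁ ω₂).Adj v u₁)
    (ha₂ : (symmGraph ω₁ ω₂).Adj v u₂) (ha₃ : (symmGraph ω₁ ω₂).Adj v u₃) :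
    u₁ = u₂ ∨ u₁ = u₃ ∨ u₂ = u₃ := by
  have same : ∀ {u u'}, (symmGraph ω₁ ω₂).Adj v u → (symmGraph ω₁ ω₂).Adj v u' →
      (s(v, u) ∈ ω₁ ↔ s(v, u') ∈ ω₁) → u = u' := by
    intro u u' hu hu' hiff
    rw [symmGraph_adj, Finset.mem_symmDiff] at hu hu'
    refine (Sym2.congr_right (a := v)).1 ?_
    by_cases hω₁ : s(v, u) ∈ ω₁
    · exact h₁.eq_of_mem hω₁ (hiff.1 hω₁) (Sym2.mem_mk_left _ _) (Sym2.mem_mk_left _ _)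
    · exact h₂.eq_of_mem (by tauto) (by tauto) (Sym2.mem_mk_left _ _) (Sym2.mem_mk_left _ _)
  have := same ha₁ ha₂
  have := same ha₁ ha₃
  have := same ha₂ ha₃
  tauto

lemma IsDimerCover.symmGraph_neighborSet_subsingleton_of_mem_left (h₁ : IsDimerCover G M₁ ω₁)
    (h₂ : IsDimerCover G M₂ ω₂) {v : V} (hv : v ∈ M₁) :
    ((symmGraph ω₁ ω₂).neighborSet v).Subsingleton := by
  have hω₂ : ∀ {u}, (symmGraph ω₁ ω₂).Adj v u → s(v, u) ∈ ω₂ := by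
    intro u hu
    rw [symmGraph_adj, Finset.mem_symmDiff] at hu
    exact (hu.1.resolve_left fun h => h₁.2.1 v hv _ h.1 (Sym2.mem_mk_left _ _)).1
  intro u hu u' hu'
  exact Sym2.congr_right.1
    (h₂.eq_of_mem (hω₂ hu) (hω₂ hu') (Sym2.mem_mk_left _ _) (Sym2.mem_mk_left _ _))

lemma IsDimerCover.symmGraph_neighborSet_subsingleton (h₁ : IsDimerCover G M₁ ω₁)
    (h₂ : IsDimerCover G M₂ ω₂) {v : V} (hv : v ∈ M₁ ∪ M₂) :
    ((symmGraph ω₁ ω₂).neighborSet v).Subsingleton := by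
  rcases Finset.mem_union.1 hv with hv | hv
  · exact h₁.symmGraph_neighborSet_subsingleton_of_mem_left h₂ hv
  · rw [symmGraph_comm]
    exact h₂.symmGraph_neighborSet_subsingleton_of_mem_left h₁ hv

lemma IsDimerCover.eq_or_eq_of_reachable (h₁ : IsDimerCover G M₁ ω₁)
    (h₂ : IsDimerCover G M₂ ω₂) {a b c : V} (ha : a ∈ M₁ ∪ M₂) (hb : b ∈ M₁ ∪ M₂)
    (hc : c ∈ M₁ ∪ M₂) (hbc : b ≠ c) (hreach : (symmGraph ω₁ ω₂).Reachable b c)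
    (hba : (symmGraph ω₁ ω₂).Reachable b a) : a = b ∨ a = c :=
  SimpleGraph.eq_or_eq_of_reachable_of_subsingleton_neighborSet
    (fun _ _ _ _ => h₁.eq_or_eq_or_eq_of_symmGraph_adj h₂)
    (h₁.symmGraph_neighborSet_subsingleton h₂ ha) (h₁.symmGraph_neighborSet_subsingleton h₂ hb)
    (h₁.symmGraph_neighborSet_subsingleton h₂ hc) hbc hreach hba

end Overlay

section Switching

variable {V : Type*} [DecidableEq V] {G : SimpleGraph V} {M₁ M₂ : Finset V}
  {ω₁ ω₂ : Finset (Sym2 V)}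

noncomputable def overlayComponent (ω₁ ω₂ : Finset (Sym2 V)) (w : V) : Finset (Sym2 V) :=
  (ω₁ ∆ ω₂).filter (fun e => ∃ u, u ∈ e ∧ (symmGraph ω₁ ω₂).Reachable w u)

lemma overlayComponent_subset (ω₁ ω₂ : Finset (Sym2 V)) (w : V) :
    overlayComponent ω₁ ω₂ w ⊆ ω₁ ∆ ω₂ :=
  Finset.filter_subset _ _

lemma mem_overlayComponent_iff {w v : V} {e : Sym2 V} (hv : (symmGraph ω₁ ω₂).Reachable w v)
    (hve : v ∈ e) : e ∈ overlayComponent ω₁ ω₂ w ↔ e ∈ ω₁ ∆ ω₂ := by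
  rw [overlayComponent, Finset.mem_filter]
  exact ⟨And.left, fun he => ⟨he, v, hve, hv⟩⟩

lemma not_mem_overlayComponent {w v : V} {e : Sym2 V} (hv : ¬ (symmGraph ω₁ ω₂).Reachable w v)
    (hve : v ∈ e) : e ∉ overlayComponent ω₁ ω₂ w := by
  rw [overlayComponent, Finset.mem_filter]
  rintro ⟨he, u, hue, hu⟩
  exact hv (hu.trans (reachable_of_mem_symmDiff he hue hve))

lemma overlayComponent_comm (ω₁ ω₂ : Finset (Sym2 V)) (w : V) :
    overlayComponent ω₂ ω₁ w = overlayComponent ω₁ ω₂ w := by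
  rw [overlayComponent, overlayComponent, symmGraph_comm, symmDiff_comm]

lemma overlayComponent_symmDiff_symmDiff (ω₁ ω₂ γ : Finset (Sym2 V)) (w : V) :
    overlayComponent (ω₁ ∆ γ) (ω₂ ∆ γ) w = overlayComponent ω₁ ω₂ w := by
  rw [overlayComponent, overlayComponent, symmGraph_symmDiff_symmDiff,
    symmDiff_symmDiff_symmDiff_comm, symmDiff_self, symmDiff_bot]

lemma overlayComponent_eq_of_reachable {w w' : V} (h : (symmGraph ω₁ ω₂).Reachable w w') :
    overlayComponent ω₁ ω₂ w = overlayComponent ω₁ ω₂ w' :=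
  Finset.filter_congr fun _ _ =>
    exists_congr fun _ => and_congr_right fun _ => ⟨h.symm.trans, h.trans⟩

/-- Switched along a component of the overlay, `ω₁` agrees with `ω₂` at every vertex of that
component and with `ω₁` everywhere else. -/
lemma IsDimerCover.symmDiff_overlayComponent (h₁ : IsDimerCover G M₁ ω₁)
    (h₂ : IsDimerCover G M₂ ω₂) (w : V) :
    IsDimerCover G ({v ∈ M₁ | ¬ (symmGraph ω₁ ω₂).Reachable w v} ∪
        {v ∈ M₂ | (symmGraph ω₁ ω₂).Reachable w v})
      (ω₁ ∆ overlayComponent ω₁ ω₂ w) := by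
  refine IsDimerCover.of_local fun v => ?_
  by_cases hv : (symmGraph ω₁ ω₂).Reachable w v
  · refine ⟨M₂, ω₂, h₂, by simp [hv], fun e hve => ?_⟩
    have := mem_overlayComponent_iff hv hve
    rw [Finset.mem_symmDiff] at this ⊢
    tauto
  · refine ⟨M₁, ω₁, h₁, by simp [hv], fun e hve => ?_⟩
    have := not_mem_overlayComponent hv hve
    rw [Finset.mem_symmDiff]
    tauto

noncomputable def overlaySwitch (w : V) (p : Finset (Sym2 V) × Finset (Sym2 V)) :
    Finset (Sym2 V) × Finset (Sym2 V) :=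
  (p.1 ∆ overlayComponent p.1 p.2 w, p.2 ∆ overlayComponent p.1 p.2 w)

lemma symmGraph_overlaySwitch (w : V) (p : Finset (Sym2 V) × Finset (Sym2 V)) :
    symmGraph (overlaySwitch w p).1 (overlaySwitch w p).2 = symmGraph p.1 p.2 :=
  symmGraph_symmDiff_symmDiff _ _ _

lemma overlaySwitch_overlaySwitch (w : V) (p : Finset (Sym2 V) × Finset (Sym2 V)) :
    overlaySwitch w (overlaySwitch w p) = p := by
  simp only [overlaySwitch, overlayComponent_symmDiff_symmDiff, symmDiff_symmDiff_cancel_right]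

lemma overlaySwitch_eq_of_reachable {w w' : V} {p : Finset (Sym2 V) × Finset (Sym2 V)}
    (h : (symmGraph p.1 p.2).Reachable w w') : overlaySwitch w p = overlaySwitch w' p := by
  rw [overlaySwitch, overlaySwitch, overlayComponent_eq_of_reachable h]

lemma IsDimerCover.overlaySwitch_of_reachable {S : Finset V} {a b c : V} (ha : a ∈ S)
    (hb : b ∈ S) (hc : c ∈ S) (hab : a ≠ b) (hac : a ≠ c) (hbc : b ≠ c)
    {p : Finset (Sym2 V) × Finset (Sym2 V)} (h₁ : IsDimerCover G {a, b} p.1)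
    (h₂ : IsDimerCover G (S \ {a, b}) p.2) {C : List (V × V)}
    (hC : ∀ q ∈ C, (symmGraph p.1 p.2).Reachable q.1 q.2)
    (hreach : (symmGraph p.1 p.2).Reachable b c) :
    IsDimerCover G {a, c} (overlaySwitch b p).1 ∧
      IsDimerCover G (S \ {a, c}) (overlaySwitch b p).2 ∧
      ∀ q ∈ C, (symmGraph (overlaySwitch b p).1 (overlaySwitch b p).2).Reachable q.1 q.2 := by
  have hS : {a, b} ∪ S \ {a, b} = S :=
    Finset.union_sdiff_of_subset (Finset.insert_subset ha (Finset.singleton_subset_iff.2 hb))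
  have hR : ∀ v ∈ S, (symmGraph p.1 p.2).Reachable b v ↔ v = b ∨ v = c := by
    refine fun v hv => ⟨fun h => ?_, ?_⟩
    · rw [← hS] at hv hb hc
      exact h₁.eq_or_eq_of_reachable h₂ hv hb hc hbc hreach h
    · rintro (rfl | rfl)
      exacts [.refl _, hreach]
  have hM₁ : {v ∈ ({a, b} : Finset V) | ¬ (symmGraph p.1 p.2).Reachable b v} ∪
      {v ∈ S \ {a, b} | (symmGraph p.1 p.2).Reachable b v} = {a, c} := by
    ext v
    simp only [Finset.mem_union, Finset.mem_filter, Finset.mem_sdiff, Finset.mem_insert,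
      Finset.mem_singleton]
    grind
  have hM₂ : {v ∈ S \ {a, b} | ¬ (symmGraph p.1 p.2).Reachable b v} ∪
      {v ∈ ({a, b} : Finset V) | (symmGraph p.1 p.2).Reachable b v} = S \ {a, c} := by
    ext v
    simp only [Finset.mem_union, Finset.mem_filter, Finset.mem_sdiff, Finset.mem_insert,
      Finset.mem_singleton]
    grind
  refine ⟨?_, ?_, by rwa [symmGraph_overlaySwitch]⟩
  · simpa only [overlaySwitch, hM₁] using h₁.symmDiff_overlayComponent h₂ b
  · simpa only [overlaySwitch, symmGraph_comm p.2, overlayComponent_comm, hM₂] using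
      h₂.symmDiff_overlayComponent h₁ b

end Switching

section Signs

variable {α : Type*} [DecidableEq α]

lemma Finset.prod_symmDiff_mul_prod_symmDiff {M : Type*} [CommMonoid M] {s t γ : Finset α}
    (hγ : γ ⊆ s ∆ t) (f : α → M) :
    (∏ x ∈ s ∆ γ, f x) * ∏ x ∈ t ∆ γ, f x = (∏ x ∈ s, f x) * ∏ x ∈ t, f x := by
  rw [← Finset.prod_union_inter, ← Finset.prod_union_inter (s₁ := s)]
  congr 2 <;> ext x <;> have := @hγ x <;> simp only [Finset.mem_union, Finset.mem_inter,
    Finset.mem_symmDiff] at this ⊢ <;> tauto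

lemma Finset.card_symmDiff_add_two_mul_card_inter (s t : Finset α) :
    (s ∆ t).card + 2 * (s ∩ t).card = s.card + t.card := by
  rw [symmDiff_def, Finset.sup_eq_union, Finset.card_union_of_disjoint disjoint_sdiff_sdiff,
    ← Finset.card_sdiff_add_card_inter s t, ← Finset.card_sdiff_add_card_inter t s,
    Finset.inter_comm t s]
  ring

lemma Finset.cast_card_symmDiff_inter (s t u : Finset α) :
    (((s ∆ t) ∩ u).card : ZMod 2) = (s ∩ u).card + (t ∩ u).card := by
  have h := congrArg (Nat.cast : ℕ → ZMod 2)
    (Finset.card_symmDiff_add_two_mul_card_inter (s ∩ u) (t ∩ u))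
  push_cast at h
  rwa [show (2 : ZMod 2) = 0 from rfl, zero_mul, add_zero, ← Finset.inf_eq_inter,
    ← Finset.inf_eq_inter, ← inf_symmDiff_distrib_right] at h

lemma neg_one_pow_eq_of_cast_eq {R : Type*} [Monoid R] [HasDistribNeg R] {a b : ℕ}
    (h : (a : ZMod 2) = b) : (-1 : R) ^ a = (-1) ^ b :=
  neg_one_pow_congr (by rw [← ZMod.natCast_eq_zero_iff_even, ← ZMod.natCast_eq_zero_iff_even, h])

lemma neg_one_pow_switch {R : Type*} [Monoid R] [HasDistribNeg R] (A B γ : Finset α)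
    (ℓ : ℕ → Finset α) {n k l : ℕ} (hk : k ∈ Finset.Icc 2 (2 * n))
    (hl : l ∈ Finset.Icc 2 (2 * n)) :
    (-1 : R) ^ (∑ j ∈ {1, k}, (A ∩ ℓ j).card) *
        (-1) ^ (∑ j ∈ (Finset.Icc 2 (2 * n)).erase k, (B ∩ ℓ j).card) =
      ((-1) ^ (∑ j ∈ Finset.Icc 1 (2 * n), (γ ∩ ℓ j).card) *
          (-1) ^ ((A ∩ ℓ k).card + (A ∩ ℓ l).card + (B ∩ ℓ k).card + (B ∩ ℓ l).card)) *
        ((-1) ^ (∑ j ∈ {1, l}, ((A ∆ γ) ∩ ℓ j).card) *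
          (-1) ^ (∑ j ∈ (Finset.Icc 2 (2 * n)).erase l, ((B ∆ γ) ∩ ℓ j).card)) := by
  have h1k : 1 ≠ k := by rw [Finset.mem_Icc] at hk; omega
  have h1l : 1 ≠ l := by rw [Finset.mem_Icc] at hl; omega
  have hIcc : Finset.Icc 1 (2 * n) = insert 1 (Finset.Icc 2 (2 * n)) :=
    (Finset.insert_Icc_add_one_left_eq_Icc (by rw [Finset.mem_Icc] at hk; omega)).symm
  simp only [← pow_add]
  apply neg_one_pow_eq_of_cast_eq
  push_cast
  rw [Finset.sum_pair h1k, Finset.sum_pair h1l, hIcc,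
    Finset.sum_insert (by simp), Finset.sum_erase_eq_sub hk, Finset.sum_erase_eq_sub hl]
  simp only [Finset.cast_card_symmDiff_inter, Finset.sum_add_distrib]
  ring_nf
  reduce_mod_char

lemma prod_mul_neg_one_pow_switch {R : Type*} [CommRing R] (K : α → R) {A B γ : Finset α}
    (hγ : γ ⊆ A ∆ B) (ℓ : ℕ → Finset α) {n k l : ℕ} (hk : k ∈ Finset.Icc 2 (2 * n))
    (hl : l ∈ Finset.Icc 2 (2 * n)) :
    ((∏ b ∈ A, K b) * (-1) ^ (∑ j ∈ {1, k}, (A ∩ ℓ j).card)) *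
        ((∏ b ∈ B, K b) * (-1) ^ (∑ j ∈ (Finset.Icc 2 (2 * n)).erase k, (B ∩ ℓ j).card)) =
      ((-1) ^ (∑ j ∈ Finset.Icc 1 (2 * n), (γ ∩ ℓ j).card) *
          (-1) ^ ((A ∩ ℓ k).card + (A ∩ ℓ l).card + (B ∩ ℓ k).card + (B ∩ ℓ l).card)) *
        (((∏ b ∈ A ∆ γ, K b) * (-1) ^ (∑ j ∈ {1, l}, ((A ∆ γ) ∩ ℓ j).card)) *
          ((∏ b ∈ B ∆ γ, K b) *
            (-1) ^ (∑ j ∈ (Finset.Icc 2 (2 * n)).erase l, ((B ∆ γ) ∩ ℓ j).card))) := by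
  rw [mul_mul_mul_comm, neg_one_pow_switch A B γ ℓ hk hl,
    ← Finset.prod_symmDiff_mul_prod_symmDiff hγ]
  ring

end Signs

section Labelled

variable {V : Type*} [DecidableEq V] {G : SimpleGraph V} {x : ℕ → V} {n i j : ℕ}

lemma pair_subset_image_Icc (hi : i ∈ Finset.Icc 2 (2 * n)) :
    {x 1, x i} ⊆ (Finset.Icc 1 (2 * n)).image x := by
  rw [Finset.mem_Icc] at hi
  refine Finset.insert_subset (Finset.mem_image_of_mem x ?_)
    (Finset.singleton_subset_iff.2 (Finset.mem_image_of_mem x ?_)) <;>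
  rw [Finset.mem_Icc] <;> omega

lemma overlaySwitch_admissible
    (hinj : ∀ a ∈ Finset.Icc 1 (2 * n), ∀ b ∈ Finset.Icc 1 (2 * n), x a = x b → a = b)
    (hi : i ∈ Finset.Icc 2 (2 * n)) (hj : j ∈ Finset.Icc 2 (2 * n)) (hij : i ≠ j)
    {C : List (V × V)} {p : Finset (Sym2 V) × Finset (Sym2 V)}
    (hp : IsDimerCover G {x 1, x i} p.1 ∧
      IsDimerCover G ((Finset.Icc 1 (2 * n)).image x \ {x 1, x i}) p.2 ∧
      ∀ q ∈ C, (symmGraph p.1 p.2).Reachable q.1 q.2)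
    (hreach : (symmGraph p.1 p.2).Reachable (x i) (x j)) :
    IsDimerCover G {x 1, x j} (overlaySwitch (x i) p).1 ∧
      IsDimerCover G ((Finset.Icc 1 (2 * n)).image x \ {x 1, x j}) (overlaySwitch (x i) p).2 ∧
      ∀ q ∈ C,
        (symmGraph (overlaySwitch (x i) p).1 (overlaySwitch (x i) p).2).Reachable q.1 q.2 := by
  have hxi := pair_subset_image_Icc (x := x) hi
  have hxj := pair_subset_image_Icc (x := x) hj
  have hx : ∀ {a b}, a ∈ Finset.Icc 1 (2 * n) → b ∈ Finset.Icc 1 (2 * n) → a ≠ b → x a ≠ x b :=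
    fun ha hb hab hx => hab (hinj _ ha _ hb hx)
  have hIcc : Finset.Icc 2 (2 * n) ⊆ Finset.Icc 1 (2 * n) := Finset.Icc_subset_Icc_left one_le_two
  have h1 : 1 ∈ Finset.Icc 1 (2 * n) := by rw [Finset.mem_Icc] at hi ⊢; omega
  have h1i : 1 ≠ i := by rw [Finset.mem_Icc] at hi; omega
  have h1j : 1 ≠ j := by rw [Finset.mem_Icc] at hj; omega
  exact IsDimerCover.overlaySwitch_of_reachable (hxi (by simp)) (hxi (by simp)) (hxj (by simp))
    (hx h1 (hIcc hi) h1i) (hx h1 (hIcc hj) h1j) (hx (hIcc hi) (hIcc hj) hij) hp.1 hp.2.1 hp.2.2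
    hreach

end Labelled

theorem switching_principle_II_second_general {V : Type*} [Fintype V] [DecidableEq V]
    (G : SimpleGraph V) (K : Sym2 V → ℂ) (n : ℕ)
    (x : ℕ → V) (ℓ : ℕ → Finset (Sym2 V))
    (hinj : ∀ i ∈ Finset.Icc 1 (2 * n), ∀ j ∈ Finset.Icc 1 (2 * n), x i = x j → i = j)
    -- intersection-parity hypothesis: for every component `γ` of an overlay
    -- joining the monomers `x k` and `x l`, the parity of the intersection
    -- numbers with the disorder lines is `(-1)^(k-l-1)`
    (hpar : ∀ M₁ M₂ : Finset V, Disjoint M₁ M₂ →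
      M₁ ∪ M₂ = (Finset.Icc 1 (2 * n)).image x →
      ∀ ω₁ ω₂ : Finset (Sym2 V), IsDimerCover G M₁ ω₁ → IsDimerCover G M₂ ω₂ →
      ∀ k ∈ Finset.Icc 1 (2 * n), ∀ l ∈ Finset.Icc 1 (2 * n), k ≠ l →
        (symmGraph ω₁ ω₂).Reachable (x k) (x l) →
        (-1 : ℂ) ^ (∑ j ∈ Finset.Icc 1 (2 * n),
            ((((ω₁ ∆ ω₂).filter
                (fun e => ∃ u, u ∈ e ∧ (symmGraph ω₁ ω₂).Reachable (x k) u)) ∩ ℓ j).card)) *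
          (-1 : ℂ) ^ ((ω₁ ∩ ℓ k).card + (ω₁ ∩ ℓ l).card +
            (ω₂ ∩ ℓ k).card + (ω₂ ∩ ℓ l).card) =
          (-1 : ℂ) ^ ((k : ℤ) - (l : ℤ) - 1))
    (k l m : ℕ) (hk : k ∈ Finset.Icc 2 (2 * n)) (hl : l ∈ Finset.Icc 2 (2 * n))
    (hkl : k ≠ l) :
    Wdouble G K ℓ {x 1, x k} {1, k}
        (((Finset.Icc 1 (2 * n)).image x) \ {x 1, x k}) ((Finset.Icc 2 (2 * n)).erase k)
        [(x 1, x m), (x k, x l)] =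
      (-1 : ℂ) ^ ((k : ℤ) - (l : ℤ) - 1) *
        Wdouble G K ℓ {x 1, x l} {1, l}
          (((Finset.Icc 1 (2 * n)).image x) \ {x 1, x l}) ((Finset.Icc 2 (2 * n)).erase l)
          [(x 1, x m), (x k, x l)] := by
  rw [Wdouble, Wdouble, Finset.mul_sum]
  refine Finset.sum_nbij' (overlaySwitch (x k)) (overlaySwitch (x k)) ?_ ?_
    (fun p _ => overlaySwitch_overlaySwitch _ p) (fun p _ => overlaySwitch_overlaySwitch _ p) ?_
  · intro p hp
    rw [Finset.mem_filter] at hp ⊢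
    exact ⟨Finset.mem_univ _, overlaySwitch_admissible hinj hk hl hkl hp.2
      (hp.2.2.2 (x k, x l) (by simp))⟩
  · intro p hp
    rw [Finset.mem_filter] at hp ⊢
    have hreach := hp.2.2.2 (x k, x l) (by simp)
    rw [overlaySwitch_eq_of_reachable hreach]
    exact ⟨Finset.mem_univ _, overlaySwitch_admissible hinj hl hk hkl.symm hp.2 hreach.symm⟩
  · rintro ⟨ω₁, ω₂⟩ hp
    obtain ⟨-, h₁, h₂, hC⟩ := Finset.mem_filter.1 hp
    have hIcc : Finset.Icc 2 (2 * n) ⊆ Finset.Icc 1 (2 * n) :=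
      Finset.Icc_subset_Icc_left one_le_two
    have hsign := hpar _ _ disjoint_sdiff_self_right
      (Finset.union_sdiff_of_subset (pair_subset_image_Icc hk)) ω₁ ω₂ h₁ h₂ k (hIcc hk) l
      (hIcc hl) hkl (hC (x k, x l) (by simp))
    -- `hpar` decides reachability with the `Fintype` instance, `overlayComponent` classically
    rw [show (ω₁ ∆ ω₂).filter (fun e => ∃ u, u ∈ e ∧ (symmGraph ω₁ ω₂).Reachable (x k) u) =
      overlayComponent ω₁ ω₂ (x k) by rw [overlayComponent]; congr] at hsign
    rw [← hsign]
    exact prod_mul_neg_one_pow_switch K (overlayComponent_subset ω₁ ω₂ (x k)) ℓ hk hl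

/-- Switching principle II, second identity. -/
theorem switching_principle_II_second {V : Type*} [Fintype V] [DecidableEq V]
    (G : SimpleGraph V) (K : Sym2 V → ℂ) (n : ℕ) (hn : 1 ≤ n)
    (x : ℕ → V) (ℓ : ℕ → Finset (Sym2 V))
    (hinj : ∀ i ∈ Finset.Icc 1 (2 * n), ∀ j ∈ Finset.Icc 1 (2 * n), x i = x j → i = j)
    (hℓ : ∀ j ∈ Finset.Icc 1 (2 * n), ↑(ℓ j) ⊆ G.edgeSet)
    -- intersection-parity hypothesis: for every component `γ` of an overlay
    -- joining the monomers `x k` and `x l`, the parity of the intersection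
    -- numbers with the disorder lines is `(-1)^(k-l-1)`
    (hpar : ∀ M₁ M₂ : Finset V, Disjoint M₁ M₂ →
      M₁ ∪ M₂ = (Finset.Icc 1 (2 * n)).image x →
      ∀ ω₁ ω₂ : Finset (Sym2 V), IsDimerCover G M₁ ω₁ → IsDimerCover G M₂ ω₂ →
      ∀ k ∈ Finset.Icc 1 (2 * n), ∀ l ∈ Finset.Icc 1 (2 * n), k ≠ l →
        (symmGraph ω₁ ω₂).Reachable (x k) (x l) →
        (-1 : ℂ) ^ (∑ j ∈ Finset.Icc 1 (2 * n),
            ((((ω₁ ∆ ω₂).filter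
                (fun e => ∃ u, u ∈ e ∧ (symmGraph ω₁ ω₂).Reachable (x k) u)) ∩ ℓ j).card)) *
          (-1 : ℂ) ^ ((ω₁ ∩ ℓ k).card + (ω₁ ∩ ℓ l).card +
            (ω₂ ∩ ℓ k).card + (ω₂ ∩ ℓ l).card) =
          (-1 : ℂ) ^ ((k : ℤ) - (l : ℤ) - 1))
    (k l m : ℕ) (hk : k ∈ Finset.Icc 2 (2 * n)) (hl : l ∈ Finset.Icc 2 (2 * n))
    (hm : m ∈ Finset.Icc 2 (2 * n)) (hkl : k ≠ l) (hlm : l ≠ m) (hkm : k ≠ m) :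
    Wdouble G K ℓ {x 1, x k} {1, k}
        (((Finset.Icc 1 (2 * n)).image x) \ {x 1, x k}) ((Finset.Icc 2 (2 * n)).erase k)
        [(x 1, x m), (x k, x l)] =
      (-1 : ℂ) ^ ((k : ℤ) - (l : ℤ) - 1) *
        Wdouble G K ℓ {x 1, x l} {1, l}
          (((Finset.Icc 1 (2 * n)).image x) \ {x 1, x l}) ((Finset.Icc 2 (2 * n)).erase l)
          [(x 1, x m), (x k, x l)] :=
  switching_principle_II_second_general G K n x ℓ hinj hpar k l m hk hl hkl
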